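/- arXiv:2405.03310 — 3 statements merged into one kernel-verified Lean document; each statement's English description precedes it below -/
import Mathlib

section
/- Let Γ be a weakly distance-regular digraph, and let q, s, t be integers with q ≥ 3. Suppose that p^{(2,q-2)}_{(1,s-1),(1,t-1)} ≠ 0, that q ∈ T, and that q ≠ s. Then (1,q-1) is mixed. -/
variable {V : Type*}

/-- There is a directed walk of length `n` from `x` to `y` in the digraph with arc relation `A`. -/
def HasWalk (A : V → V → Prop) : ℕ → V → V → Prop
  | 0, x, y => x = y
  | n + 1, x, y => ∃ z, A x z ∧ HasWalk A n z y

/-- The distance `∂(x,y)`: the length of a shortest directed path from `x` to `y`. -/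
noncomputable def ddist (A : V → V → Prop) (x y : V) : ℕ :=
  sInf {n : ℕ | HasWalk A n x y}

/-- The two-way distance `∂̃(x,y) = (∂(x,y), ∂(y,x))`. -/
noncomputable def tdist (A : V → V → Prop) (x y : V) : ℕ × ℕ :=
  (ddist A x y, ddist A y x)

/-- The two-way distance set `∂̃(Γ)`. -/
def tset (A : V → V → Prop) : Set (ℕ × ℕ) :=
  {d : ℕ × ℕ | ∃ x y : V, tdist A x y = d}

/-- A (finite) weakly distance-regular digraph: a loopless strongly connected digraph
together with its intersection numbers `p h i j = p^{h}_{i,j}`, where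
`p h i j = 0` by convention whenever one of `h`, `i`, `j` is not a two-way distance. -/
structure WDRDigraph (V : Type*) [Fintype V] where
  Adj : V → V → Prop
  loopless : ∀ v : V, ¬ Adj v v
  strongly_connected : ∀ x y : V, ∃ n : ℕ, HasWalk Adj n x y
  p : ℕ × ℕ → ℕ × ℕ → ℕ × ℕ → ℕ
  card_inter : ∀ (i j : ℕ × ℕ) (x y : V),
    {z : V | tdist Adj x z = i ∧ tdist Adj z y = j}.ncard = p (tdist Adj x y) i j
  p_not_in : ∀ h i j : ℕ × ℕ,
    h ∉ tset Adj ∨ i ∉ tset Adj ∨ j ∉ tset Adj → p h i j = 0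

variable [Fintype V]

/-- A weakly distance-regular digraph is commutative if `p^{h}_{i,j} = p^{h}_{j,i}`
for all two-way distances `h`, `i`, `j`. -/
def WDRDigraph.Commutative (G : WDRDigraph V) : Prop :=
  ∀ h i j : ℕ × ℕ, h ∈ tset G.Adj → i ∈ tset G.Adj → j ∈ tset G.Adj →
    G.p h i j = G.p h j i

/-- A digraph is semicomplete if any two distinct vertices are joined by at least one arc. -/
def Semicomplete (A : V → V → Prop) : Prop :=
  ∀ x y : V, x ≠ y → A x y ∨ A y x

/-- A digraph is locally semicomplete if the out-neighbourhood and the in-neighbourhood of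
every vertex induce semicomplete digraphs. -/
def LocallySemicomplete (A : V → V → Prop) : Prop :=
  ∀ x y z : V, y ≠ z →
    ((A x y → A x z → (A y z ∨ A z y)) ∧ (A y x → A z x → (A y z ∨ A z y)))

/-- A circuit of length `q`, encoded as a function `ZMod q → V` each of whose
consecutive pairs (cyclically) is an arc. -/
def IsCircuit (A : V → V → Prop) (q : ℕ) (c : ZMod q → V) : Prop :=
  ∀ i : ZMod q, A (c i) (c (i + 1))

/-- The arc `(x, y)` (of type `(1, q-1)`) is pure: every circuit of length `q`
containing it consists of arcs of type `(1, q-1)`. -/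
def PureArc (A : V → V → Prop) (q : ℕ) (x y : V) : Prop :=
  ∀ c : ZMod q → V, IsCircuit A q c → c 0 = x → c 1 = y →
    ∀ i : ZMod q, tdist A (c i) (c (i + 1)) = (1, q - 1)

/-- `(1, q-1)` is pure: every arc of type `(1, q-1)` is pure. -/
def TypePure (A : V → V → Prop) (q : ℕ) : Prop :=
  ∀ x y : V, tdist A x y = (1, q - 1) → PureArc A q x y

/-- `(1, q-1)` is mixed: some arc of type `(1, q-1)` is not pure. -/
def TypeMixed (A : V → V → Prop) (q : ℕ) : Prop :=
  ∃ x y : V, tdist A x y = (1, q - 1) ∧ ¬ PureArc A q x y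

/-- The number `k_i` of vertices at two-way distance `i` from `x`
(independent of `x` in a weakly distance-regular digraph). -/
noncomputable def kval (A : V → V → Prop) (i : ℕ × ℕ) (x : V) : ℕ :=
  {y : V | tdist A x y = i}.ncard


section Aux

variable {A : V → V → Prop}

lemma hasWalk_append : ∀ {m : ℕ} {n : ℕ} {x y z : V},
    HasWalk A m x y → HasWalk A n y z → HasWalk A (m + n) x z := by
  intro m
  induction m with
  | zero =>
    intro n x y z h1 h2
    have hxy : x = y := h1
    subst hxy
    simpa using h2
  | succ k ih =>
    intro n x y z h1 h2
    obtain ⟨w, hw, hw2⟩ := h1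
    rw [Nat.succ_add]
    exact ⟨w, hw, ih hw2 h2⟩

lemma ddist_le {n : ℕ} {x y : V} (h : HasWalk A n x y) : ddist A x y ≤ n :=
  Nat.sInf_le h

lemma hasWalk_ddist (hsc : ∀ x y : V, ∃ n : ℕ, HasWalk A n x y) (x y : V) :
    HasWalk A (ddist A x y) x y :=
  Nat.sInf_mem (hsc x y)

lemma ddist_triangle (hsc : ∀ x y : V, ∃ n : ℕ, HasWalk A n x y) (x y z : V) :
    ddist A x z ≤ ddist A x y + ddist A y z :=
  ddist_le (hasWalk_append (hasWalk_ddist hsc x y) (hasWalk_ddist hsc y z))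

lemma eq_of_ddist_eq_zero (hsc : ∀ x y : V, ∃ n : ℕ, HasWalk A n x y) {x y : V}
    (h : ddist A x y = 0) : x = y := by
  have := hasWalk_ddist hsc x y
  rw [h] at this
  exact this

lemma adj_of_ddist_eq_one (hsc : ∀ x y : V, ∃ n : ℕ, HasWalk A n x y) {x y : V}
    (h : ddist A x y = 1) : A x y := by
  have := hasWalk_ddist hsc x y
  rw [h] at this
  obtain ⟨w, hw, he⟩ := this
  have : w = y := he
  subst this
  exact hw

lemma circuit_walk {q : ℕ} {c : ZMod q → V} (hc : IsCircuit A q c) :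
    ∀ (m : ℕ) (i : ZMod q), HasWalk A m (c i) (c (i + (m : ZMod q)))
  | 0, i => by
      have he : i + ((0:ℕ) : ZMod q) = i := by push_cast; ring
      rw [he]
      show c i = c i
      rfl
  | (m+1), i => ⟨c (i + 1), hc i, by
      have h := circuit_walk hc m (i + 1)
      have he : i + 1 + (m : ZMod q) = i + ((m+1 : ℕ) : ZMod q) := by push_cast; ring
      rwa [he] at h⟩

lemma hasWalk_exists_fun : ∀ {n : ℕ} {x y : V}, HasWalk A n x y →
    ∃ f : ℕ → V, f 0 = x ∧ f n = y ∧ ∀ i < n, A (f i) (f (i+1)) := by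
  intro n
  induction n with
  | zero =>
    intro x y h
    exact ⟨fun _ => x, rfl, h, fun i hi => absurd hi (by omega)⟩
  | succ k ih =>
    intro x y h
    obtain ⟨z, hxz, hzy⟩ := h
    obtain ⟨g, hg0, hgk, hga⟩ := ih hzy
    refine ⟨fun i => if i = 0 then x else g (i-1), rfl, by simp [hgk], ?_⟩
    intro i hi
    match i with
    | 0 => simpa [hg0] using hxz
    | j+1 => simpa using hga j (by omega)

lemma tdist_eq_iff {x y : V} {u v : ℕ} :
    tdist A x y = (u, v) ↔ ddist A x y = u ∧ ddist A y x = v := by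
  simp [tdist, Prod.ext_iff]

end Aux

/-- In a weakly distance-regular digraph, if `q ≥ 3`,
`p^{(2,q-2)}_{(1,s-1),(1,t-1)} ≠ 0`, `q ∈ T` and `q ≠ s`, then `(1,q-1)` is mixed. -/
theorem statement0 [Nonempty V] (G : WDRDigraph V) (q s t : ℕ) (hq : 3 ≤ q)
    (hp : G.p (2, q - 2) (1, s - 1) (1, t - 1) ≠ 0)
    (hqT : ((1, q - 1) : ℕ × ℕ) ∈ tset G.Adj)
    (hqs : q ≠ s) :
    TypeMixed G.Adj q := by
  classical
  haveI : NeZero q := ⟨by omega⟩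
  haveI : Fact (1 < q) := ⟨by omega⟩
  have hsc := G.strongly_connected
  by_contra hmix
  unfold TypeMixed at hmix
  push_neg at hmix
  -- extract an arc of type (1, q-1)
  obtain ⟨a, b, hab⟩ := hqT
  have hab' := hab
  rw [tdist_eq_iff] at hab'
  obtain ⟨hab1, hab2⟩ := hab'
  have hAab : G.Adj a b := adj_of_ddist_eq_one hsc hab1
  have hwba : HasWalk G.Adj (q-1) b a := by
    have := hasWalk_ddist hsc b a
    rwa [hab2] at this
  obtain ⟨g, hg0, hgq, hga⟩ := hasWalk_exists_fun hwba
  -- build the circuit of length q through (a, b)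
  obtain ⟨c, hc, hc0, hc1⟩ :
      ∃ c : ZMod q → V, IsCircuit G.Adj q c ∧ c 0 = a ∧ c 1 = b := by
    refine ⟨fun i => if i.val = 0 then a else g (i.val - 1), ?_, by simp, ?_⟩
    · intro i
      have hiv : i.val < q := ZMod.val_lt i
      have hval : (i+1).val = (i.val + 1) % q := by
        rw [ZMod.val_add, ZMod.val_one]
      simp only
      by_cases h : i.val = q - 1
      · have hv0 : (i+1).val = 0 := by
          rw [hval, h, Nat.sub_add_cancel (by omega), Nat.mod_self]
        rw [hv0, h]
        have h1 : q - 1 ≠ 0 := by omega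
        rw [if_neg h1, if_pos rfl]
        have := hga (q-2) (by omega)
        have he : q - 2 + 1 = q - 1 := by omega
        rw [he, hgq] at this
        exact this
      · have hv1 : (i+1).val = i.val + 1 := by
          rw [hval, Nat.mod_eq_of_lt (by omega)]
        rw [hv1, if_neg (by omega : ¬ i.val + 1 = 0)]
        by_cases h0 : i.val = 0
        · rw [h0, if_pos rfl]
          simpa [hg0] using hAab
        · rw [if_neg h0]
          have := hga (i.val - 1) (by omega)
          have he : i.val - 1 + 1 = i.val := by omega
          rw [he] at this
          simpa using this
    · have hv1 : (1 : ZMod q).val = 1 := ZMod.val_one q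
      simp [hv1, hg0]
  -- by purity, all arcs of the circuit are of type (1, q-1)
  have h_all := hmix a b hab c hc hc0 hc1
  have e01 := (tdist_eq_iff).mp (h_all 0)
  have e12 : ddist G.Adj (c 1) (c 2) = 1 ∧ ddist G.Adj (c 2) (c 1) = q - 1 := by
    have := (tdist_eq_iff).mp (h_all 1)
    have h2 : (1 : ZMod q) + 1 = 2 := by ring
    rwa [h2] at this
  have e23 : tdist G.Adj (c 2) (c 3) = (1, q - 1) := by
    have := h_all 2
    have h3 : (2 : ZMod q) + 1 = 3 := by ring
    rwa [h3] at this
  have e32 : ddist G.Adj (c 3) (c 2) = q - 1 := ((tdist_eq_iff).mp e23).2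
  have e01' : ddist G.Adj (c 0) (c 1) = 1 := by
    have := e01.1
    have h1 : (0 : ZMod q) + 1 = 1 := by ring
    rwa [h1] at this
  -- distance bounds
  have w02 : HasWalk G.Adj 2 (c 0) (c 2) := by
    have := circuit_walk hc 2 0
    have he : (0 : ZMod q) + ((2:ℕ) : ZMod q) = 2 := by push_cast; ring
    rwa [he] at this
  have d02le : ddist G.Adj (c 0) (c 2) ≤ 2 := ddist_le w02
  have hq2 : ((q - 2 : ℕ) : ZMod q) = -2 := by
    rw [Nat.cast_sub (by omega)]
    simp
  have w20 : HasWalk G.Adj (q-2) (c 2) (c 0) := by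
    have := circuit_walk hc (q-2) 2
    rw [hq2] at this
    have he : (2 : ZMod q) + (-2) = 0 := by ring
    rwa [he] at this
  have d20le : ddist G.Adj (c 2) (c 0) ≤ q - 2 := ddist_le w20
  have d20ge : q - 1 ≤ ddist G.Adj (c 2) (c 0) + 1 := by
    have htri := ddist_triangle hsc (c 2) (c 0) (c 1)
    have h21 : ddist G.Adj (c 2) (c 1) = q - 1 := e12.2
    have h01 : ddist G.Adj (c 0) (c 1) = 1 := e01'
    omega
  have d20 : ddist G.Adj (c 2) (c 0) = q - 2 := by omega
  have d02ne0 : ddist G.Adj (c 0) (c 2) ≠ 0 := by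
    intro h0
    have := eq_of_ddist_eq_zero hsc h0
    rw [this] at d20
    have : ddist G.Adj (c 2) (c 2) = 0 :=
      Nat.le_antisymm (ddist_le (rfl : HasWalk G.Adj 0 (c 2) (c 2))) (Nat.zero_le _)
    omega
  have d02ne1 : ddist G.Adj (c 0) (c 2) ≠ 1 := by
    intro h1
    have hadj : G.Adj (c 0) (c 2) := adj_of_ddist_eq_one hsc h1
    have hq3 : ((q - 3 : ℕ) : ZMod q) = -3 := by
      rw [Nat.cast_sub (by omega)]
      simp
    have w30 : HasWalk G.Adj (q-3) (c 3) (c 0) := by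
      have := circuit_walk hc (q-3) 3
      rw [hq3] at this
      have he : (3 : ZMod q) + (-3) = 0 := by ring
      rwa [he] at this
    have w32 : HasWalk G.Adj (q-3+1) (c 3) (c 2) :=
      hasWalk_append w30 ⟨c 2, hadj, rfl⟩
    have : ddist G.Adj (c 3) (c 2) ≤ q - 3 + 1 := ddist_le w32
    omega
  have d02 : ddist G.Adj (c 0) (c 2) = 2 := by omega
  -- find the intermediate vertex z
  have hcard := G.card_inter (1, s-1) (1, t-1) (c 0) (c 2)
  have htd02 : tdist G.Adj (c 0) (c 2) = (2, q - 2) := by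
    rw [tdist_eq_iff]
    exact ⟨d02, d20⟩
  rw [htd02] at hcard
  have hne : {z : V | tdist G.Adj (c 0) z = (1, s-1) ∧
      tdist G.Adj z (c 2) = (1, t-1)}.Nonempty := by
    apply Set.nonempty_of_ncard_ne_zero
    rw [hcard]
    exact hp
  obtain ⟨z, hz1, hz2⟩ := hne
  have hA0z : G.Adj (c 0) z := adj_of_ddist_eq_one hsc ((tdist_eq_iff.mp hz1).1)
  have hAz2 : G.Adj z (c 2) := adj_of_ddist_eq_one hsc ((tdist_eq_iff.mp hz2).1)
  -- ZMod facts
  have hne0 : (0 : ZMod q) ≠ -1 := by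
    intro h
    have : (1 : ZMod q) = 0 := by linear_combination h
    exact one_ne_zero this
  have hne1 : (1 : ZMod q) ≠ -1 := by
    intro h
    have h2 : ((2:ℕ) : ZMod q) = 0 := by push_cast; linear_combination h
    rw [ZMod.natCast_eq_zero_iff] at h2
    have := Nat.le_of_dvd (by norm_num) h2
    omega
  have hnem2 : (-2 : ZMod q) ≠ -1 := by
    intro h
    have : (1 : ZMod q) = 0 := by linear_combination -h
    exact one_ne_zero this
  -- the mixed circuit
  set d : ZMod q → V := fun j => if j = -1 then z else c (j + 2) with hd
  have hd0 : d 0 = c 2 := by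
    rw [hd]
    simp only [if_neg hne0]
    norm_num
  have hd1 : d 1 = c 3 := by
    rw [hd]
    simp only [if_neg hne1]
    norm_num
  have hdm2 : d (-2) = c 0 := by
    rw [hd]
    simp only [if_neg hnem2]
    norm_num
  have hdm1 : d (-1) = z := by
    rw [hd]
    simp
  have hdc : IsCircuit G.Adj q d := by
    intro i
    by_cases hi1 : i = -1
    · rw [hi1]
      have h1 : (-1 : ZMod q) + 1 = 0 := by ring
      rw [h1, hdm1, hd0]
      exact hAz2
    · by_cases hi2 : i = -2
      · rw [hi2]
        have h1 : (-2 : ZMod q) + 1 = -1 := by ring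
        rw [h1, hdm2, hdm1]
        exact hA0z
      · have hip1 : i + 1 ≠ -1 := by
          intro h
          apply hi2
          linear_combination h
        rw [hd]
        simp only [if_neg hi1, if_neg hip1]
        have := hc (i + 2)
        have he : i + 2 + 1 = i + 1 + 2 := by ring
        rwa [he] at this
  -- apply purity to the mixed circuit: contradiction
  have := hmix (c 2) (c 3) e23 d hdc hd0 hd1 (-2)
  have hm1 : (-2 : ZMod q) + 1 = -1 := by ring
  rw [hm1, hdm2, hdm1, hz1] at this
  have : s - 1 = q - 1 := (Prod.ext_iff.mp this).2
  omega
end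

section
/- Let Γ be a locally semicomplete commutative weakly distance-regular digraph with (1,1) ∈ ∂̃(Γ). Suppose there are no vertices x,y,z with ∂̃(x,y)=∂̃(y,z)=(1,1) and ∂̃(x,z)=(1,2) (i.e. Γ_{1,2} ∉ Γ_{1,1}²). Then the relation 'x = z or ∂̃(x,z)=(1,1)' is an equivalence relation on the vertices of Γ, each of whose classes has exactly k_{1,1}+1 vertices, and any two distinct vertices in the same class are at two-way distance (1,1); in other words, the subdigraph Δ_2 is isomorphic to the complete graph on k_{1,1}+1 vertices. -/
variable {V : Type*}

variable [Fintype V]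

/-!
Write `x ≈ z` for `∂̃(x,z) = (1,1)`. If `x ≈ y ≈ z` with `x ≠ z`, then `x` and `z` are both
out-neighbours of `y`, so local semicompleteness gives an arc between them, say `x → z`. The walk
`z → y → x` gives `∂(z,x) ≤ 2`, and `∂(z,x) = 2` would make `(x,z)` a pair of type `(1,2)` in
`Γ_{1,1}²`; hence `z → x` as well and `x ≈ z`. So equality-or-`≈` is an equivalence relation, and the
class of `x` consists of `x` and its `k_{1,1}` vertices at two-way distance `(1,1)`.
-/

section Distance

omit [Fintype V]

variable {A : V → V → Prop}

theorem hasWalk_one_iff {x y : V} : HasWalk A 1 x y ↔ A x y := by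
  simp [HasWalk]

theorem ddist_eq_of_hasWalk {n : ℕ} {x y : V} (h : HasWalk A n x y)
    (hmin : ∀ m < n, ¬ HasWalk A m x y) : ddist A x y = n :=
  le_antisymm (Nat.sInf_le h) (le_csInf ⟨n, h⟩ fun m hm => not_lt.1 fun hlt => hmin m hlt hm)

theorem ddist_eq_one_iff (hA : ∀ v, ¬ A v v) {x y : V} : ddist A x y = 1 ↔ A x y := by
  refine ⟨fun h => ?_, fun hxy => ddist_eq_of_hasWalk (hasWalk_one_iff.2 hxy) ?_⟩
  · have hwalk : HasWalk A (ddist A x y) x y := Nat.sInf_mem (Nat.nonempty_of_sInf_eq_succ h)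
    rwa [h, hasWalk_one_iff] at hwalk
  · intro m hm hwalk
    obtain rfl : x = y := by rwa [Nat.lt_one_iff.1 hm] at hwalk
    exact hA x hxy

theorem ddist_eq_two_of_adj_of_adj {x y z : V} (hxy : A x y) (hyz : A y z)
    (hxz : x ≠ z) (hnxz : ¬ A x z) : ddist A x z = 2 := by
  refine ddist_eq_of_hasWalk ⟨y, hxy, hasWalk_one_iff.2 hyz⟩ fun m hm hwalk => ?_
  interval_cases m
  · exact hxz hwalk
  · exact hnxz (hasWalk_one_iff.1 hwalk)

theorem tdist_swap {x y : V} : (tdist A x y).swap = tdist A y x := rfl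

theorem tdist_eq_one_one_iff (hA : ∀ v, ¬ A v v) {x y : V} :
    tdist A x y = (1, 1) ↔ A x y ∧ A y x := by
  rw [tdist, Prod.mk.injEq, ddist_eq_one_iff hA, ddist_eq_one_iff hA]

theorem tdist_eq_one_one_symm {x y : V} (h : tdist A x y = (1, 1)) : tdist A y x = (1, 1) := by
  rw [← tdist_swap, h, Prod.swap_prod_mk]

end Distance

section NoOneTwoInOneOneSquare

omit [Fintype V]

variable {A : V → V → Prop} (hA : ∀ v, ¬ A v v)
  (hno : ¬ ∃ x y z : V, tdist A x y = (1, 1) ∧ tdist A y z = (1, 1) ∧ tdist A x z = (1, 2))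
include hA hno

theorem adj_of_tdist_eq_one_one_of_adj {x y z : V} (hxy : tdist A x y = (1, 1))
    (hyz : tdist A y z = (1, 1)) (hxz : A x z) : A z x := by
  by_contra hzx
  have hzyx : A z y ∧ A y x :=
    ⟨((tdist_eq_one_one_iff hA).1 hyz).2, ((tdist_eq_one_one_iff hA).1 hxy).2⟩
  have hzx_ne : z ≠ x := by
    rintro rfl
    exact hA z hxz
  refine hno ⟨x, y, z, hxy, hyz, ?_⟩
  rw [tdist, (ddist_eq_one_iff hA).2 hxz, ddist_eq_two_of_adj_of_adj hzyx.1 hzyx.2 hzx_ne hzx]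

theorem tdist_eq_one_one_trans (hls : LocallySemicomplete A) {x y z : V}
    (hxy : tdist A x y = (1, 1)) (hyz : tdist A y z = (1, 1)) (hxz : x ≠ z) :
    tdist A x z = (1, 1) := by
  have hyx : A y x := ((tdist_eq_one_one_iff hA).1 hxy).2
  have hyz' : A y z := ((tdist_eq_one_one_iff hA).1 hyz).1
  rw [tdist_eq_one_one_iff hA]
  rcases (hls y x z hxz).1 hyx hyz' with hxz' | hzx'
  · exact ⟨hxz', adj_of_tdist_eq_one_one_of_adj hA hno hxy hyz hxz'⟩
  · exact ⟨adj_of_tdist_eq_one_one_of_adj hA hno (tdist_eq_one_one_symm hyz)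
      (tdist_eq_one_one_symm hxy) hzx', hzx'⟩

theorem equivalence_eq_or_tdist_eq_one_one (hls : LocallySemicomplete A) :
    Equivalence (fun x z : V => x = z ∨ tdist A x z = (1, 1)) where
  refl _ := Or.inl rfl
  symm
    | .inl h => .inl h.symm
    | .inr h => .inr (tdist_eq_one_one_symm h)
  trans {x y z} hxy hyz := by
    rcases hxy with rfl | hxy
    · exact hyz
    rcases hyz with rfl | hyz
    · exact .inr hxy
    rcases eq_or_ne x z with rfl | hxz
    · exact .inl rfl
    · exact .inr (tdist_eq_one_one_trans hA hno hls hxy hyz hxz)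

end NoOneTwoInOneOneSquare

theorem ncard_eq_or_tdist_eq_one_one {A : V → V → Prop} (hA : ∀ v, ¬ A v v) (x : V) :
    {z : V | x = z ∨ tdist A x z = (1, 1)}.ncard = kval A (1, 1) x + 1 := by
  have hx : x ∉ {z : V | tdist A x z = (1, 1)} := fun h =>
    hA x ((tdist_eq_one_one_iff hA).1 h).1
  have hclass : {z : V | x = z ∨ tdist A x z = (1, 1)} =
      insert x {z : V | tdist A x z = (1, 1)} := by
    ext z
    simp [eq_comm]
  rw [hclass, Set.ncard_insert_of_notMem hx (Set.toFinite _), kval]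

theorem statement1_general (G : WDRDigraph V)
    (hls : LocallySemicomplete G.Adj)
    (hno : ¬ ∃ x y z : V, tdist G.Adj x y = (1, 1) ∧ tdist G.Adj y z = (1, 1) ∧
        tdist G.Adj x z = (1, 2)) :
    Equivalence (fun x z : V => x = z ∨ tdist G.Adj x z = (1, 1)) ∧
    (∀ x : V, {z : V | x = z ∨ tdist G.Adj x z = (1, 1)}.ncard = kval G.Adj (1, 1) x + 1) ∧
    (∀ x y z : V, (x = y ∨ tdist G.Adj x y = (1, 1)) → (x = z ∨ tdist G.Adj x z = (1, 1)) →
      y ≠ z → tdist G.Adj y z = (1, 1)) := by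
  have hequiv := equivalence_eq_or_tdist_eq_one_one G.loopless hno hls
  exact ⟨hequiv, ncard_eq_or_tdist_eq_one_one G.loopless, fun x y z hxy hxz hyz =>
    (hequiv.trans (hequiv.symm hxy) hxz).resolve_left hyz⟩

/-- in a locally semicomplete commutative weakly distance-regular digraph with
`(1,1) ∈ ∂̃(Γ)` and `Γ_{1,2} ∉ Γ_{1,1}²`, the relation `x = z ∨ ∂̃(x,z) = (1,1)` is an
equivalence relation with classes of size `k_{1,1} + 1`, and any two distinct vertices in a
common class are at two-way distance `(1,1)`. -/
theorem statement1 [Nonempty V] (G : WDRDigraph V)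
    (hls : LocallySemicomplete G.Adj) (hcomm : G.Commutative)
    (h11 : ((1, 1) : ℕ × ℕ) ∈ tset G.Adj)
    (hno : ¬ ∃ x y z : V, tdist G.Adj x y = (1, 1) ∧ tdist G.Adj y z = (1, 1) ∧
        tdist G.Adj x z = (1, 2)) :
    Equivalence (fun x z : V => x = z ∨ tdist G.Adj x z = (1, 1)) ∧
    (∀ x : V, {z : V | x = z ∨ tdist G.Adj x z = (1, 1)}.ncard = kval G.Adj (1, 1) x + 1) ∧
    (∀ x y z : V, (x = y ∨ tdist G.Adj x y = (1, 1)) → (x = z ∨ tdist G.Adj x z = (1, 1)) →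
      y ≠ z → tdist G.Adj y z = (1, 1)) :=
  statement1_general G hls hno
end

section
/- Let Γ be a locally semicomplete commutative weakly distance-regular digraph in which (1,3) is mixed. If there exist vertices x,y,z and positive integers i,q with ∂̃(x,y)=(1,3), ∂̃(y,z)=(1,q) and ∂̃(x,z)=(2,i), then i = 2 and q ∈ {2,3}. -/
variable {V : Type*}

variable [Fintype V]

/-!
Local semicompleteness forces the bounds: if `y → z`, `y → a`, `∂(a,x) = 2` and `∂(z,x) ≥ 3`, then
`z → a`, whence `∂(z,x) ≤ 3`. When `i = 2`, `q ≤ ∂(z,x) + ∂(x,y) = 3`. When `i = 3`, weak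
distance-regularity copies the configuration onto every `(1,3)`-arc `u → v`, giving `v → w` with
`∂̃(u,w) = (2,3)`. With these witnesses both diagonals of a `4`-circuit through `u → v` have
two-way distance `(2,2)`, so every other arc of the circuit has type `(1,2)` or `(1,3)`.
Commutativity lets us permute consecutive arcs of a circuit, so a `(1,2)`-arc can be moved to
the position just before `u`, where local semicompleteness and the witness for `u → v` rule it
out. Hence `(1,3)` is pure.
-/

theorem hasWalk_add {α : Type*} {A : α → α → Prop} :
    ∀ {m n : ℕ} {x y z : α}, HasWalk A m x y → HasWalk A n y z → HasWalk A (m + n) x z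
  | 0, _, _, _, _, rfl, h => by simpa using h
  | m + 1, _, _, _, _, ⟨w, hxw, hw⟩, h => by
      rw [Nat.add_right_comm]
      exact ⟨w, hxw, hasWalk_add hw h⟩

theorem tdist_eq_iff_s5 {α : Type*} {A : α → α → Prop} {x y : α} {a b : ℕ} :
    tdist A x y = (a, b) ↔ ddist A x y = a ∧ ddist A y x = b :=
  Prod.ext_iff

theorem TypeMixed.not_typePure {α : Type*} {A : α → α → Prop} {q : ℕ} (h : TypeMixed A q) :
    ¬ TypePure A q := by
  obtain ⟨x, y, hxy, hnp⟩ := h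
  exact fun hp => hnp (hp x y hxy)

def OneThreeArcsExtendToTwoThree {α : Type*} (A : α → α → Prop) : Prop :=
  ∀ u v : α, tdist A u v = (1, 3) → ∃ w, tdist A u w = (2, 3) ∧ A v w

namespace WDRDigraph

variable (G : WDRDigraph V)

theorem hasWalk_ddist (x y : V) : HasWalk G.Adj (ddist G.Adj x y) x y :=
  Nat.sInf_mem (G.strongly_connected x y)

theorem ddist_le_of_hasWalk {n : ℕ} {x y : V} (h : HasWalk G.Adj n x y) :
    ddist G.Adj x y ≤ n :=
  Nat.sInf_le h

theorem ddist_self (x : V) : ddist G.Adj x x = 0 :=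
  Nat.le_zero.mp (G.ddist_le_of_hasWalk (n := 0) rfl)

theorem eq_of_ddist_eq_zero {x y : V} (h : ddist G.Adj x y = 0) : x = y := by
  simpa [h, HasWalk] using G.hasWalk_ddist x y

theorem ddist_triangle (x y z : V) :
    ddist G.Adj x z ≤ ddist G.Adj x y + ddist G.Adj y z :=
  G.ddist_le_of_hasWalk (hasWalk_add (G.hasWalk_ddist x y) (G.hasWalk_ddist y z))

theorem ddist_le_one_of_adj {x y : V} (h : G.Adj x y) : ddist G.Adj x y ≤ 1 :=
  G.ddist_le_of_hasWalk ⟨y, h, rfl⟩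

theorem ddist_eq_one_of_adj {x y : V} (h : G.Adj x y) : ddist G.Adj x y = 1 := by
  have hne : x ≠ y := fun hxy => G.loopless x (hxy ▸ h)
  have := G.ddist_le_one_of_adj h
  have := mt G.eq_of_ddist_eq_zero hne
  omega

theorem adj_of_ddist_eq_one {x y : V} (h : ddist G.Adj x y = 1) : G.Adj x y := by
  obtain ⟨w, hxw, rfl⟩ := h ▸ G.hasWalk_ddist x y
  exact hxw

theorem tdist_of_adj {x y : V} (h : G.Adj x y) : tdist G.Adj x y = (1, ddist G.Adj y x) :=
  tdist_eq_iff_s5.mpr ⟨G.ddist_eq_one_of_adj h, rfl⟩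

theorem adj_of_tdist_eq {x y : V} {r : ℕ} (h : tdist G.Adj x y = (1, r)) : G.Adj x y :=
  G.adj_of_ddist_eq_one (tdist_eq_iff_s5.mp h).1

theorem ddist_le_two_of_adj_of_adj {x y z : V} (hxy : G.Adj x y) (hyz : G.Adj y z) :
    ddist G.Adj x z ≤ 2 :=
  G.ddist_le_of_hasWalk ⟨y, hxy, z, hyz, rfl⟩

theorem exists_adj_ddist_of_ddist_eq_succ {x y : V} {n : ℕ} (h : ddist G.Adj x y = n + 1) :
    ∃ w, G.Adj x w ∧ ddist G.Adj w y = n := by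
  obtain ⟨w, hxw, hwy⟩ := h ▸ G.hasWalk_ddist x y
  refine ⟨w, hxw, le_antisymm (G.ddist_le_of_hasWalk hwy) ?_⟩
  have := G.ddist_triangle x w y
  have := G.ddist_le_one_of_adj hxw
  omega

end WDRDigraph

namespace LocallySemicomplete

variable {G : WDRDigraph V}

theorem ddist_le_one_or_of_common_source (hls : LocallySemicomplete G.Adj) {x y z : V}
    (hxy : G.Adj x y) (hxz : G.Adj x z) : ddist G.Adj y z ≤ 1 ∨ ddist G.Adj z y ≤ 1 := by
  rcases eq_or_ne y z with rfl | hne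
  · simp [G.ddist_self]
  · exact ((hls x y z hne).1 hxy hxz).imp G.ddist_le_one_of_adj G.ddist_le_one_of_adj

theorem ddist_le_one_or_of_common_target (hls : LocallySemicomplete G.Adj) {x y z : V}
    (hyx : G.Adj y x) (hzx : G.Adj z x) : ddist G.Adj y z ≤ 1 ∨ ddist G.Adj z y ≤ 1 := by
  rcases eq_or_ne y z with rfl | hne
  · simp [G.ddist_self]
  · exact ((hls x y z hne).2 hyx hzx).imp G.ddist_le_one_of_adj G.ddist_le_one_of_adj

theorem ddist_eq_one_of_adj_of_adj (hls : LocallySemicomplete G.Adj) {x y z a : V}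
    (hyz : G.Adj y z) (hya : G.Adj y a) (hax : ddist G.Adj a x = 2)
    (hxz : 2 ≤ ddist G.Adj x z) (hzx : 3 ≤ ddist G.Adj z x) : ddist G.Adj z a = 1 := by
  have hza := G.ddist_triangle z a x
  have hza0 := mt G.eq_of_ddist_eq_zero (fun h : z = a => by subst h; omega)
  rcases hls.ddist_le_one_or_of_common_source hyz hya with h | h
  · omega
  have haz : G.Adj a z := G.adj_of_ddist_eq_one <| by
    have := mt G.eq_of_ddist_eq_zero (fun h : a = z => by subst h; omega)
    omega
  obtain ⟨b, hab, hbx⟩ := G.exists_adj_ddist_of_ddist_eq_succ (n := 1) hax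
  have hzb := G.ddist_triangle z b x
  have hbz0 := mt G.eq_of_ddist_eq_zero (fun h : b = z => by subst h; omega)
  rcases hls.ddist_le_one_or_of_common_source hab haz with h' | h'
  · have hbz : G.Adj b z := G.adj_of_ddist_eq_one (by omega)
    have := hls.ddist_le_one_or_of_common_source (G.adj_of_ddist_eq_one hbx) hbz
    omega
  · omega

theorem tdist_eq_one_two_or_one_three (hls : LocallySemicomplete G.Adj) {a b c d : V}
    (hab : G.Adj a b) (hbc : G.Adj b c) (hcd : G.Adj c d) (hda : G.Adj d a)
    (hac : ddist G.Adj a c = 2) (hca : ddist G.Adj c a = 2) :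
    tdist G.Adj a b = (1, 2) ∨ tdist G.Adj a b = (1, 3) := by
  rw [G.tdist_of_adj hab]
  have hba3 : ddist G.Adj b a ≤ 3 :=
    G.ddist_le_of_hasWalk ⟨c, hbc, d, hcd, a, hda, rfl⟩
  have hba0 := mt G.eq_of_ddist_eq_zero (fun h : b = a => G.loopless a (h ▸ hab))
  have hba1 : ddist G.Adj b a ≠ 1 := fun h => by
    have := hls.ddist_le_one_or_of_common_source (G.adj_of_ddist_eq_one h) hbc
    omega
  have : ddist G.Adj b a = 2 ∨ ddist G.Adj b a = 3 := by omega
  simpa using this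

end LocallySemicomplete

namespace WDRDigraph

variable (G : WDRDigraph V)

theorem exists_of_p_ne_zero {x y : V} {i j : ℕ × ℕ} (hp : G.p (tdist G.Adj x y) i j ≠ 0) :
    ∃ m, tdist G.Adj x m = i ∧ tdist G.Adj m y = j := by
  rw [← G.card_inter] at hp
  exact Set.nonempty_of_ncard_ne_zero hp

theorem p_tdist_ne_zero (x y m : V) :
    G.p (tdist G.Adj x y) (tdist G.Adj x m) (tdist G.Adj m y) ≠ 0 := by
  rw [← G.card_inter]
  exact ((Set.ncard_pos (Set.toFinite _)).mpr ⟨m, Set.mem_ofPred.mpr ⟨rfl, rfl⟩⟩).ne'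

theorem exists_tdist_eq_of_tdist_eq {x y x' y' : V} (h : tdist G.Adj x y = tdist G.Adj x' y')
    (m : V) : ∃ m', tdist G.Adj x' m' = tdist G.Adj x m ∧ tdist G.Adj m' y' = tdist G.Adj m y :=
  G.exists_of_p_ne_zero (h ▸ G.p_tdist_ne_zero x y m)

theorem exists_tdist_swap (hcomm : G.Commutative) (x y m : V) :
    ∃ m', tdist G.Adj x m' = tdist G.Adj m y ∧ tdist G.Adj m' y = tdist G.Adj x m := by
  apply G.exists_of_p_ne_zero
  rw [hcomm _ _ _ ⟨x, y, rfl⟩ ⟨m, y, rfl⟩ ⟨x, m, rfl⟩]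
  exact G.p_tdist_ne_zero x y m

theorem oneThreeArcsExtendToTwoThree_of_adj {x y z : V} (hxy : tdist G.Adj x y = (1, 3))
    (hyz : G.Adj y z) (hxz : tdist G.Adj x z = (2, 3)) :
    OneThreeArcsExtendToTwoThree G.Adj := by
  intro u v huv
  obtain ⟨w, huw, hwv⟩ := G.exists_tdist_eq_of_tdist_eq (hxy.trans huv.symm) z
  refine ⟨w, huw.trans hxz, G.adj_of_ddist_eq_one ?_⟩
  rw [tdist_eq_iff_s5.mp hwv |>.2, G.ddist_eq_one_of_adj hyz]

theorem ddist_eq_two_of_adj_of_ddist_eq_two (hls : LocallySemicomplete G.Adj)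
    (hcomm : G.Commutative) (hext : OneThreeArcsExtendToTwoThree G.Adj) {u v a : V}
    (huv : tdist G.Adj u v = (1, 3)) (hva : G.Adj v a) (hau : ddist G.Adj a u = 2) :
    ddist G.Adj u a = 2 := by
  obtain ⟨w, huw, hvw⟩ := hext u v huv
  obtain ⟨huw, hwu⟩ := tdist_eq_iff_s5.mp huw
  have hwa := hls.ddist_eq_one_of_adj_of_adj hvw hva hau (by omega) (by omega)
  have hua := G.ddist_le_two_of_adj_of_adj (G.adj_of_tdist_eq huv) hva
  have hua0 := mt G.eq_of_ddist_eq_zero (fun h : u = a => by subst h; omega)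
  -- if `∂(u,a) = 1`, then `b → w` and `b → u`, although `w` and `u` are not adjacent
  obtain ⟨b, hwb, hbu⟩ := G.exists_tdist_swap hcomm w u a
  obtain ⟨hwb, hbw⟩ := tdist_eq_iff_s5.mp hwb
  obtain ⟨hbu, -⟩ := tdist_eq_iff_s5.mp hbu
  by_contra hua2
  have := hls.ddist_le_one_or_of_common_source (x := b) (y := w) (z := u)
    (G.adj_of_ddist_eq_one (by omega)) (G.adj_of_ddist_eq_one (by omega))
  omega

theorem circuit_diagonals (hls : LocallySemicomplete G.Adj) (hcomm : G.Commutative)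
    (hext : OneThreeArcsExtendToTwoThree G.Adj) {u v s t : V} (hvs : G.Adj v s)
    (hst : G.Adj s t) (htu : G.Adj t u) (huv : tdist G.Adj u v = (1, 3)) :
    ddist G.Adj u s = 2 ∧ ddist G.Adj s u = 2 ∧ ddist G.Adj v t = 2 ∧ ddist G.Adj t v = 2 := by
  obtain ⟨-, hvu⟩ := tdist_eq_iff_s5.mp huv
  have hsu : ddist G.Adj s u = 2 := by
    have := G.ddist_le_two_of_adj_of_adj hst htu
    have := G.ddist_triangle v s u
    have := G.ddist_le_one_of_adj hvs
    omega
  have hvt : ddist G.Adj v t = 2 := by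
    have := G.ddist_le_two_of_adj_of_adj hvs hst
    have := G.ddist_triangle v t u
    have := G.ddist_le_one_of_adj htu
    omega
  refine ⟨G.ddist_eq_two_of_adj_of_ddist_eq_two hls hcomm hext huv hvs hsu, hsu, hvt, ?_⟩
  obtain ⟨t', hvt', ht'u⟩ := G.exists_tdist_swap hcomm v u t
  rw [G.tdist_of_adj htu] at hvt'
  obtain ⟨ht'u, hut'⟩ := tdist_eq_iff_s5.mp ht'u
  rw [← hut']
  exact G.ddist_eq_two_of_adj_of_ddist_eq_two hls hcomm hext huv (G.adj_of_tdist_eq hvt')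
    (ht'u.trans hvt)

theorem tdist_ne_one_two_of_circuit (hls : LocallySemicomplete G.Adj) (hcomm : G.Commutative)
    (hext : OneThreeArcsExtendToTwoThree G.Adj) {u v s t : V} (hvs : G.Adj v s)
    (hst : G.Adj s t) (htu : G.Adj t u) (huv : tdist G.Adj u v = (1, 3)) :
    tdist G.Adj t u ≠ (1, 2) := by
  intro htu12
  obtain ⟨-, -, hvt, htv⟩ := G.circuit_diagonals hls hcomm hext hvs hst htu huv
  obtain ⟨-, hut⟩ := tdist_eq_iff_s5.mp htu12
  obtain ⟨m, hum, hmt⟩ := G.exists_adj_ddist_of_ddist_eq_succ (n := 1) hut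
  have huv' := G.adj_of_tdist_eq huv
  rcases hls.ddist_le_one_or_of_common_source huv' hum with hvm | hmv
  · have hvm : G.Adj v m := G.adj_of_ddist_eq_one <| by
      have := mt G.eq_of_ddist_eq_zero (fun h : v = m => by subst h; omega)
      omega
    have hmu : ddist G.Adj m u = 1 := by
      have := G.ddist_le_two_of_adj_of_adj (G.adj_of_ddist_eq_one hmt) htu
      have := mt G.eq_of_ddist_eq_zero (fun h : m = u => G.loopless u (h ▸ hum))
      have : ddist G.Adj m u ≠ 2 := fun h => by
        have := G.ddist_eq_two_of_adj_of_ddist_eq_two hls hcomm hext huv hvm h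
        have := G.ddist_eq_one_of_adj hum
        omega
      omega
    obtain ⟨w, huw, hvw⟩ := hext u v huv
    obtain ⟨huw, hwu⟩ := tdist_eq_iff_s5.mp huw
    have := G.ddist_triangle w m u
    rcases hls.ddist_le_one_or_of_common_source hvm hvw with hmw | hwm
    · have hmw : G.Adj m w := G.adj_of_ddist_eq_one <| by
        have := mt G.eq_of_ddist_eq_zero (fun h : m = w => by subst h; omega)
        omega
      have := hls.ddist_le_one_or_of_common_source (G.adj_of_ddist_eq_one hmu) hmw
      omega
    · omega
  · have hmv : G.Adj m v := G.adj_of_ddist_eq_one <| by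
      have := mt G.eq_of_ddist_eq_zero (fun h : m = v => by subst h; omega)
      omega
    have := hls.ddist_le_one_or_of_common_source hmv (G.adj_of_ddist_eq_one hmt)
    omega

theorem circuit_tdist_eq_one_three (hls : LocallySemicomplete G.Adj) (hcomm : G.Commutative)
    (hext : OneThreeArcsExtendToTwoThree G.Adj) {u v s t : V} (hvs : G.Adj v s)
    (hst : G.Adj s t) (htu : G.Adj t u) (huv : tdist G.Adj u v = (1, 3)) :
    tdist G.Adj v s = (1, 3) ∧ tdist G.Adj s t = (1, 3) ∧ tdist G.Adj t u = (1, 3) := by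
  have hlast : ∀ {s t : V}, G.Adj v s → G.Adj s t → G.Adj t u → tdist G.Adj t u ≠ (1, 2) :=
    fun hvs hst htu => G.tdist_ne_one_two_of_circuit hls hcomm hext hvs hst htu huv
  have hthird : ∀ {s t : V}, G.Adj v s → G.Adj s t → G.Adj t u → tdist G.Adj s t ≠ (1, 2) := by
    intro s t hvs hst htu hst12
    obtain ⟨t', hst', ht'u⟩ := G.exists_tdist_swap hcomm s u t
    rw [G.tdist_of_adj htu] at hst'
    exact hlast hvs (G.adj_of_tdist_eq hst') (G.adj_of_tdist_eq (ht'u.trans hst12))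
      (ht'u.trans hst12)
  have hsecond : tdist G.Adj v s ≠ (1, 2) := by
    intro hvs12
    obtain ⟨s', hvs', hs't⟩ := G.exists_tdist_swap hcomm v t s
    rw [G.tdist_of_adj hst] at hvs'
    exact hthird (G.adj_of_tdist_eq hvs') (G.adj_of_tdist_eq (hs't.trans hvs12)) htu
      (hs't.trans hvs12)
  obtain ⟨hus, hsu, hvt, htv⟩ := G.circuit_diagonals hls hcomm hext hvs hst htu huv
  have huv' := G.adj_of_tdist_eq huv
  refine ⟨?_, ?_, ?_⟩
  · exact (hls.tdist_eq_one_two_or_one_three hvs hst htu huv' hvt htv).resolve_left hsecond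
  · exact (hls.tdist_eq_one_two_or_one_three hst htu huv' hvs hsu hus).resolve_left
      (hthird hvs hst htu)
  · exact (hls.tdist_eq_one_two_or_one_three htu huv' hvs hst htv hvt).resolve_left
      (hlast hvs hst htu)

theorem typePure_four (hls : LocallySemicomplete G.Adj) (hcomm : G.Commutative)
    (hext : OneThreeArcsExtendToTwoThree G.Adj) : TypePure G.Adj 4 := by
  rintro x y hxy c hc rfl rfl i
  obtain ⟨h1, h2, h3⟩ := G.circuit_tdist_eq_one_three hls hcomm hext (hc 1) (hc 2) (hc 3) hxy
  fin_cases i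
  exacts [hxy, h1, h2, h3]

end WDRDigraph

theorem statement5_general (G : WDRDigraph V)
    (hls : LocallySemicomplete G.Adj) (hcomm : G.Commutative)
    (hmixed : TypeMixed G.Adj 4) :
    ∀ (x y z : V) (i q : ℕ), 0 < i → 0 < q →
      tdist G.Adj x y = (1, 3) → tdist G.Adj y z = (1, q) → tdist G.Adj x z = (2, i) →
      i = 2 ∧ (q = 2 ∨ q = 3) := by
  intro x y z i q _ _ hxy hyz hxz
  have hAxy := G.adj_of_tdist_eq hxy
  have hAyz := G.adj_of_tdist_eq hyz
  obtain ⟨hxy1, hyx⟩ := tdist_eq_iff_s5.mp hxy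
  obtain ⟨-, hzy⟩ := tdist_eq_iff_s5.mp hyz
  obtain ⟨hxz2, hzx⟩ := tdist_eq_iff_s5.mp hxz
  have hi2 : 2 ≤ i := by
    have := G.ddist_triangle y z x
    have := G.ddist_le_one_of_adj hAyz
    omega
  have hq2 : 2 ≤ q := by
    by_contra
    have hAzy : G.Adj z y := G.adj_of_ddist_eq_one (by omega)
    have := hls.ddist_le_one_or_of_common_target hAxy hAzy
    omega
  have hi3 : i ≤ 3 := by
    obtain ⟨a, hya, hax⟩ := G.exists_adj_ddist_of_ddist_eq_succ (n := 2) hyx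
    by_contra
    have := hls.ddist_eq_one_of_adj_of_adj hAyz hya hax (by omega) (by omega)
    have := G.ddist_triangle z a x
    omega
  obtain rfl | rfl : i = 2 ∨ i = 3 := by omega
  · have := G.ddist_triangle z x y
    exact ⟨rfl, by omega⟩
  · exact absurd (G.typePure_four hls hcomm
      (G.oneThreeArcsExtendToTwoThree_of_adj hxy hAyz hxz)) hmixed.not_typePure

/-- in a locally semicomplete commutative weakly distance-regular digraph in which
`(1,3)` is mixed, if `∂̃(x,y) = (1,3)`, `∂̃(y,z) = (1,q)` and `∂̃(x,z) = (2,i)` with `i,q`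
positive, then `i = 2` and `q ∈ {2,3}`. -/
theorem statement5 [Nonempty V] (G : WDRDigraph V)
    (hls : LocallySemicomplete G.Adj) (hcomm : G.Commutative)
    (hmixed : TypeMixed G.Adj 4) :
    ∀ (x y z : V) (i q : ℕ), 0 < i → 0 < q →
      tdist G.Adj x y = (1, 3) → tdist G.Adj y z = (1, q) → tdist G.Adj x z = (2, i) →
      i = 2 ∧ (q = 2 ∨ q = 3) :=
  statement5_general G hls hcomm hmixed
end
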